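/- Let G act on a set Ω such that distinct points have distinct stabilizers: for all α ≠ β in Ω, stabilizer(G, α) ≠ stabilizer(G, β). Let F be a field and let V be a witness to lindim_F(G, Ω) afforded by a representation (ρ, φ). Then the fixed-point subspace C_V(G) = {v ∈ V | ρ(g)(v) = v for all g ∈ G} is zero. -/
import Mathlib


/-- A representation of the action of `G` on `Ω` over the field `F`:
an injective map `φ : Ω → V` intertwining the `G`-action on `Ω` with a linear
`G`-action `ρ` on `V`. -/
def IsActionRep (F : Type*) [Field F] {G : Type*} [Group G] {Ω : Type*} [MulAction G Ω]
    {V : Type*} [AddCommGroup V] [Module F V]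
    (ρ : G →* (V ≃ₗ[F] V)) (φ : Ω → V) : Prop :=
  Function.Injective φ ∧ ∀ (g : G) (ω : Ω), φ (g • ω) = ρ g (φ ω)

/-- The `F`-linear dimension of the action of `G` on `Ω`: the infimum (in `ℕ∞`) of the
dimensions of finite-dimensional `F`-vector spaces affording a representation of the action. -/
noncomputable def lindim (F : Type*) [Field F] (G : Type*) [Group G] (Ω : Type*)
    [MulAction G Ω] : ℕ∞ :=
  ⨅ (n : ℕ) (_ : ∃ (ρ : G →* ((Fin n → F) ≃ₗ[F] (Fin n → F))) (φ : Ω → (Fin n → F)),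
      IsActionRep F ρ φ), (n : ℕ∞)


/-- The action of `G` on `Ω` is primitive: it is transitive and every `G`-block is trivial. -/
def IsPrimitiveAction (G : Type*) [Group G] (Ω : Type*) [MulAction G Ω] : Prop :=
  MulAction.IsPretransitive G Ω ∧
    ∀ B : Set Ω, MulAction.IsBlock G B → MulAction.IsTrivialBlock B

lemma lindim_le_of_rep (F : Type*) [Field F] (G : Type*) [Group G] (Ω : Type*) [MulAction G Ω]
    {W : Type*} [AddCommGroup W] [Module F W] [FiniteDimensional F W]
    (ρ : G →* (W ≃ₗ[F] W)) (φ : Ω → W) (h : IsActionRep F ρ φ) :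
    lindim F G Ω ≤ (Module.finrank F W : ℕ∞) := by
  set n := Module.finrank F W with hn
  let e : W ≃ₗ[F] (Fin n → F) := (Module.finBasis F W).equivFun
  let ρ' : G →* ((Fin n → F) ≃ₗ[F] (Fin n → F)) :=
    { toFun := fun g => (e.symm.trans (ρ g)).trans e
      map_one' := by ext x; simp
      map_mul' := by
        intro g h
        ext x
        have mulap : ∀ (f f' : (Fin n → F) ≃ₗ[F] (Fin n → F)) y, (f * f') y = f (f' y) :=
          fun _ _ _ => rfl
        have mulap' : ∀ (f f' : W ≃ₗ[F] W) y, (f * f') y = f (f' y) := fun _ _ _ => rfl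
        simp [mulap, mulap', LinearEquiv.trans_apply, map_mul] }
  refine le_trans (iInf₂_le n ?_) le_rfl
  refine ⟨ρ', e ∘ φ, e.injective.comp h.1, fun g ω => ?_⟩
  simp [ρ', h.2 g ω]

/-- Suppose `G` acts on `Ω` with distinct points having distinct stabilisers.
If `V` is a witness to `lindim_F(G, Ω)` afforded by `(ρ, φ)`, then the fixed-point subspace
`C_V(G)` is zero. -/
theorem fixed_points_eq_zero_of_witness (F : Type*) [Field F] (G : Type*) [Group G]
    (Ω : Type*) [MulAction G Ω]
    (hstab : ∀ α β : Ω, α ≠ β → MulAction.stabilizer G α ≠ MulAction.stabilizer G β)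
    (V : Type*) [AddCommGroup V] [Module F V] [FiniteDimensional F V]
    (ρ : G →* (V ≃ₗ[F] V)) (φ : Ω → V) (hrep : IsActionRep F ρ φ)
    (hwit : (Module.finrank F V : ℕ∞) = lindim F G Ω) :
    ∀ v : V, (∀ g : G, ρ g v = v) → v = 0 := by
  intro v hvfix
  by_contra hv0
  set p : Submodule F V := F ∙ v with hp
  have hmap : ∀ g : G, p.map (ρ g : V →ₗ[F] V) = p := by
    intro g
    rw [hp, Submodule.map_span]
    simp [hvfix g]
  let ρQ : G →* ((V ⧸ p) ≃ₗ[F] (V ⧸ p)) :=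
    { toFun := fun g => Submodule.Quotient.equiv p p (ρ g) (hmap g)
      map_one' := by
        apply LinearEquiv.ext
        intro x
        obtain ⟨y, rfl⟩ := Submodule.Quotient.mk_surjective p x
        simp [Submodule.Quotient.equiv, Submodule.mapQ_apply]
      map_mul' := by
        intro g h
        apply LinearEquiv.ext
        intro x
        obtain ⟨y, rfl⟩ := Submodule.Quotient.mk_surjective p x
        have mulap : ∀ (f f' : (V ⧸ p) ≃ₗ[F] (V ⧸ p)) y, (f * f') y = f (f' y) :=
          fun _ _ _ => rfl
        simp [mulap, Submodule.Quotient.equiv, Submodule.mapQ_apply] }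
  have hρQ : ∀ (g : G) (y : V), ρQ g (Submodule.Quotient.mk y) = Submodule.Quotient.mk (ρ g y) := by
    intro g y
    simp [ρQ, Submodule.Quotient.equiv, Submodule.mapQ_apply]
  have hφiff : ∀ (δ : Ω) (g : G), g • δ = δ ↔ ρ g (φ δ) = φ δ := by
    intro δ g
    constructor
    · intro h; rw [← hrep.2 g δ, h]
    · intro h; exact hrep.1 (by rw [hrep.2 g δ, h])
  have hinj : Function.Injective (fun ω => Submodule.Quotient.mk (p := p) (φ ω)) := by
    intro α β h
    by_contra hne
    apply hstab α β hne
    have hmem : φ α - φ β ∈ p := (Submodule.Quotient.eq p).mp h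
    obtain ⟨c, hc⟩ := Submodule.mem_span_singleton.mp hmem
    have hφα : φ α = c • v + φ β := by
      rw [hc]; abel
    have key : ∀ g : G, ρ g (φ α) - φ α = ρ g (φ β) - φ β := by
      intro g
      rw [hφα, map_add, map_smul, hvfix g]
      abel
    ext g
    simp only [MulAction.mem_stabilizer_iff]
    rw [hφiff α g, hφiff β g, ← sub_eq_zero, key g, sub_eq_zero]
  have hint : ∀ (g : G) (ω : Ω),
      (fun ω => Submodule.Quotient.mk (p := p) (φ ω)) (g • ω)
        = ρQ g ((fun ω => Submodule.Quotient.mk (p := p) (φ ω)) ω) := by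
    intro g ω
    simp only [hρQ, hrep.2 g ω]
  have hle := lindim_le_of_rep F G Ω ρQ _ ⟨hinj, hint⟩
  rw [← hwit, Nat.cast_le] at hle
  have hq : Module.finrank F (V ⧸ p) + Module.finrank F p = Module.finrank F V :=
    Submodule.finrank_quotient_add_finrank p
  have hp1 : Module.finrank F p = 1 := finrank_span_singleton hv0
  omega
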